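/- arXiv:math/0305395 — 2 statements merged into one kernel-verified Lean document; each statement's English description precedes it below -/
import Mathlib

section
/- Let φ : ℝ → ℝ be a nonnegative Schwartz function with φ(0) = 1, and suppose ξ² + φ(ξ) > 0 for all ξ. Then the function F(λ) = ∫_ℝ (ξ² + φ(ξ))^{-(λ+1)/2} dξ, defined and analytic for Re(λ) > 1, extends meromorphically near λ = 0 with a simple pole at λ = 0 of residue 2; in particular lim_{λ→0⁺} λ · ∫_ℝ (ξ² + φ(ξ))^{-(λ+1)/2} dξ = 2 for real λ → 0⁺. -/
open MeasureTheory Filter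

/-- Lipschitz-type bound for negative powers: for `1 ≤ a ≤ b` and `-1 ≤ e ≤ 0`,
`|a^e - b^e| ≤ b - a`. -/
lemma rpow_abs_sub_le (a b e : ℝ) (ha : 1 ≤ a) (hab : a ≤ b) (he1 : -1 ≤ e) (he0 : e ≤ 0) :
    |a ^ e - b ^ e| ≤ b - a := by
  have ha0 : (0:ℝ) < a := lt_of_lt_of_le one_pos ha
  have hb0 : (0:ℝ) < b := ha0.trans_le hab
  have hb1 : (1:ℝ) ≤ b := ha.trans hab
  have hba : b ^ e ≤ a ^ e := Real.rpow_le_rpow_of_nonpos ha0 hab he0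
  rw [abs_of_nonneg (sub_nonneg.2 hba)]
  have ht0 : 0 < a / b := div_pos ha0 hb0
  have ht1 : a / b ≤ 1 := (div_le_one hb0).2 hab
  have hs : a / b ≤ (a / b) ^ (-e) := by
    calc a / b = (a / b) ^ (1:ℝ) := (Real.rpow_one _).symm
    _ ≤ (a / b) ^ (-e) := Real.rpow_le_rpow_of_exponent_ge ht0 ht1 (by linarith)
  have hts1 : (a / b) ^ (-e) ≤ 1 :=
    Real.rpow_le_one ht0.le ht1 (by linarith)
  have hkey : a ^ e - b ^ e = a ^ e * (1 - (a / b) ^ (-e)) := by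
    have h1 : a ^ e * (a / b) ^ (-e) = b ^ e := by
      have hane : a ^ e ≠ 0 := (Real.rpow_pos_of_pos ha0 e).ne'
      have hbne : b ^ e ≠ 0 := (Real.rpow_pos_of_pos hb0 e).ne'
      rw [Real.div_rpow ha0.le hb0.le, Real.rpow_neg ha0.le, Real.rpow_neg hb0.le]
      field_simp
    rw [mul_sub, mul_one, h1]
  rw [hkey]
  have hae1 : a ^ e ≤ 1 := Real.rpow_le_one_of_one_le_of_nonpos ha he0
  calc a ^ e * (1 - (a / b) ^ (-e)) ≤ 1 * (1 - a / b) := by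
        apply mul_le_mul hae1 (by linarith) (by linarith) zero_le_one
  _ = (b - a) / b := by rw [one_mul, one_sub_div hb0.ne']
  _ ≤ b - a := div_le_self (by linarith) hb1

/-- For a nonnegative Schwartz function `φ` with `φ(0) = 1` and
`ξ² + φ(ξ) > 0` everywhere, the zeta-type function `F(λ) = ∫_ℝ (ξ² + φ(ξ))^{-(λ+1)/2} dξ`
has a simple pole at `λ = 0` with residue `2`:
`lim_{λ→0⁺} λ · ∫_ℝ (ξ² + φ(ξ))^{-(λ+1)/2} dξ = 2`. -/
theorem stmt5 (φ : SchwartzMap ℝ ℝ) (hnn : ∀ ξ, 0 ≤ φ ξ) (h0 : φ 0 = 1)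
    (hpos : ∀ ξ : ℝ, 0 < ξ ^ 2 + φ ξ) :
    Tendsto (fun lam : ℝ => lam * ∫ ξ : ℝ, (ξ ^ 2 + φ ξ) ^ (-(lam + 1) / 2))
      (nhdsWithin 0 (Set.Ioi 0)) (nhds 2) := by
  have hcont : Continuous fun ξ : ℝ => ξ ^ 2 + φ ξ := (continuous_pow 2).add φ.continuous
  obtain ⟨ξ₀, hξ₀mem, hξ₀min⟩ :=
    (isCompact_Icc : IsCompact (Set.Icc (-1:ℝ) 1)).exists_isMinOn ⟨0, by norm_num⟩
      hcont.continuousOn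
  set m : ℝ := ξ₀ ^ 2 + φ ξ₀ with hm_def
  have hm : 0 < m := hpos ξ₀
  set M : ℝ := max m⁻¹ 1 with hM_def
  have hM1 : (1:ℝ) ≤ M := le_max_right _ _
  have hM0 : (0:ℝ) ≤ M := zero_le_one.trans hM1
  set h : ℝ → ℝ := fun ξ => φ ξ + Set.indicator (Set.Icc (-1:ℝ) 1) (fun _ => M) ξ with hh_def
  have hint : Integrable h := by
    refine φ.integrable.add ?_
    exact (integrable_indicator_iff measurableSet_Icc).2
      (integrableOn_const measure_Icc_lt_top.ne)
  set C : ℝ := ∫ ξ, h ξ with hC_def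
  have hC0 : 0 ≤ C :=
    integral_nonneg fun ξ => add_nonneg (hnn ξ)
      (Set.indicator_nonneg (fun _ _ => hM0) ξ)
  have main : ∀ lam ∈ Set.Ioo (0:ℝ) 1,
      |lam * (∫ ξ : ℝ, (ξ ^ 2 + φ ξ) ^ (-(lam + 1) / 2)) - 2| ≤ C * lam := by
    intro lam hlam
    obtain ⟨hl0, hl1⟩ := hlam
    set e : ℝ := -(lam + 1) / 2 with he_def
    have he1 : -1 ≤ e := by rw [he_def]; linarith
    have he0 : e ≤ 0 := by rw [he_def]; linarith
    have h2e : 2 * e < -1 := by rw [he_def]; linarith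
    have h2e1 : 2 * e + 1 = -lam := by rw [he_def]; ring
    set S : Set ℝ := Set.Iio (-1:ℝ) ∪ Set.Ioi 1 with hS_def
    have hSm : MeasurableSet S := measurableSet_Iio.union measurableSet_Ioi
    set ind : ℝ → ℝ := S.indicator (fun x => (x ^ 2) ^ e) with hind_def
    have heq1 : Set.EqOn (fun x : ℝ => x ^ (2 * e)) (fun x => (x ^ 2) ^ e) (Set.Ioi 1) := by
      intro x hx
      have hx0 : (0:ℝ) ≤ x := le_of_lt (lt_trans one_pos hx)
      simp only
      rw [← Real.rpow_natCast x 2, ← Real.rpow_mul hx0]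
      norm_num [mul_comm]
    have hIoi : IntegrableOn (fun x : ℝ => (x ^ 2) ^ e) (Set.Ioi 1) :=
      (integrableOn_Ioi_rpow_of_lt h2e one_pos).congr_fun heq1 measurableSet_Ioi
    have hIio : IntegrableOn (fun x : ℝ => (x ^ 2) ^ e) (Set.Iio (-1)) := by
      have h1 : Integrable ((Set.Ioi (1:ℝ)).indicator fun x => (x ^ 2) ^ e) :=
        hIoi.integrable_indicator measurableSet_Ioi
      have h2 := h1.comp_neg
      have h3 : (fun t : ℝ => ((Set.Ioi (1:ℝ)).indicator fun x => (x ^ 2) ^ e) (-t))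
          = (Set.Iio (-1:ℝ)).indicator fun x => (x ^ 2) ^ e := by
        funext t
        by_cases ht : t ∈ Set.Iio (-1:ℝ)
        · rw [Set.indicator_of_mem ht]
          have : -t ∈ Set.Ioi (1:ℝ) := by simp at ht ⊢; linarith
          rw [Set.indicator_of_mem this]
          ring_nf
        · rw [Set.indicator_of_notMem ht]
          have : -t ∉ Set.Ioi (1:ℝ) := by simp at ht ⊢; linarith
          rw [Set.indicator_of_notMem this]
      rw [h3] at h2
      exact (integrable_indicator_iff measurableSet_Iio).1 h2
    have hindInt : Integrable ind := (hIio.union hIoi).integrable_indicator hSm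
    have hIoi_val : ∫ x in Set.Ioi (1:ℝ), (x ^ 2) ^ e = 1 / lam := by
      rw [← setIntegral_congr_fun measurableSet_Ioi heq1,
        integral_Ioi_rpow_of_lt h2e one_pos, h2e1, Real.one_rpow]
      field_simp
    have hIio_val : ∫ x in Set.Iio (-1:ℝ), (x ^ 2) ^ e = 1 / lam := by
      rw [setIntegral_congr_set Iio_ae_eq_Iic]
      have := integral_comp_neg_Ioi (1:ℝ) (fun x => (x ^ 2) ^ e)
      rw [← this]
      rw [← hIoi_val]
      apply setIntegral_congr_fun measurableSet_Ioi
      intro x _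
      simp [neg_pow]
    have hind_val : ∫ x, ind x = 2 / lam := by
      rw [hind_def, integral_indicator hSm, hS_def,
        setIntegral_union (by
          rw [Set.disjoint_left]; intro x hx hx'
          simp at hx hx'; linarith) measurableSet_Ioi hIio hIoi,
        hIio_val, hIoi_val]
      ring
    set fl : ℝ → ℝ := fun ξ => (ξ ^ 2 + φ ξ) ^ e with hfl_def
    have hfcont : Continuous fl := hcont.rpow_const fun x => Or.inl (hpos x).ne'
    set g : ℝ → ℝ := fun ξ => fl ξ - ind ξ with hg_def
    have hgbound : ∀ ξ, |g ξ| ≤ h ξ := by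
      intro ξ
      by_cases hξ : ξ ∈ S
      · have hξ2 : 1 ≤ ξ ^ 2 := by
          rcases hξ with hx | hx
          · simp at hx; nlinarith
          · simp at hx; nlinarith
        have hie : ind ξ = (ξ ^ 2) ^ e := Set.indicator_of_mem hξ _
        have key := rpow_abs_sub_le (ξ ^ 2) (ξ ^ 2 + φ ξ) e hξ2
          (by linarith [hnn ξ]) he1 he0
        calc |g ξ| = |(ξ ^ 2) ^ e - (ξ ^ 2 + φ ξ) ^ e| := by
              rw [hg_def]; simp only [hie]; rw [abs_sub_comm]
        _ ≤ (ξ ^ 2 + φ ξ) - ξ ^ 2 := key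
        _ = φ ξ := by ring
        _ ≤ h ξ := le_add_of_nonneg_right (Set.indicator_nonneg (fun _ _ => hM0) ξ)
      · have hie : ind ξ = 0 := Set.indicator_of_notMem hξ _
        have hξ1 : ξ ∈ Set.Icc (-1:ℝ) 1 := by
          simp only [hS_def, Set.mem_union, Set.mem_Iio, Set.mem_Ioi, not_or, not_lt] at hξ
          exact ⟨hξ.1, hξ.2⟩
        have hb := hpos ξ
        have hfle : fl ξ ≤ M := by
          rcases le_or_gt (ξ ^ 2 + φ ξ) 1 with hble | hbgt
          · calc (ξ ^ 2 + φ ξ) ^ e ≤ (ξ ^ 2 + φ ξ) ^ (-1:ℝ) :=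
                Real.rpow_le_rpow_of_exponent_ge hb hble he1
            _ = (ξ ^ 2 + φ ξ)⁻¹ := Real.rpow_neg_one _
            _ ≤ m⁻¹ := by
                apply inv_anti₀ hm
                exact isMinOn_iff.1 hξ₀min ξ hξ1
            _ ≤ M := le_max_left _ _
          · calc (ξ ^ 2 + φ ξ) ^ e ≤ 1 :=
                Real.rpow_le_one_of_one_le_of_nonpos hbgt.le he0
            _ ≤ M := hM1
        have habs : |g ξ| = fl ξ := by
          rw [hg_def]; simp only [hie, sub_zero]
          exact abs_of_nonneg (Real.rpow_nonneg hb.le _)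
        rw [habs, hh_def]
        simp only [Set.indicator_of_mem hξ1]
        linarith [hnn ξ]
    have hgmeas : AEStronglyMeasurable g volume := by
      apply AEStronglyMeasurable.sub hfcont.aestronglyMeasurable
      apply Measurable.aestronglyMeasurable
      exact Measurable.indicator (by fun_prop) hSm
    have hgint : Integrable g :=
      hint.mono' hgmeas (Filter.Eventually.of_forall fun ξ => by
        rw [Real.norm_eq_abs]; exact hgbound ξ)
    have hdecomp : fl = fun ξ => g ξ + ind ξ := by
      funext ξ; rw [hg_def]; ring
    have hsplit : ∫ ξ, fl ξ = (∫ ξ, g ξ) + 2 / lam := by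
      rw [hdecomp, integral_add hgint hindInt, hind_val]
    have hgle : |∫ ξ, g ξ| ≤ C := by
      calc |∫ ξ, g ξ| ≤ ∫ ξ, |g ξ| := by
            simpa [Real.norm_eq_abs] using norm_integral_le_integral_norm (μ := volume) g
      _ ≤ ∫ ξ, h ξ := integral_mono hgint.abs hint hgbound
      _ = C := rfl
    have hgoal : lam * (∫ ξ : ℝ, (ξ ^ 2 + φ ξ) ^ (-(lam + 1) / 2)) - 2
        = lam * ∫ ξ, g ξ := by
      have : (∫ ξ : ℝ, (ξ ^ 2 + φ ξ) ^ (-(lam + 1) / 2)) = ∫ ξ, fl ξ := by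
        rw [hfl_def]
      rw [this, hsplit]
      field_simp
      ring
    rw [hgoal, abs_mul, abs_of_pos hl0]
    calc lam * |∫ ξ, g ξ| ≤ lam * C := by
          exact mul_le_mul_of_nonneg_left hgle hl0.le
    _ = C * lam := mul_comm _ _
  have hCl : Tendsto (fun lam : ℝ => C * lam) (nhdsWithin 0 (Set.Ioi 0)) (nhds 0) := by
    have h1 : Tendsto (fun lam : ℝ => C * lam) (nhds 0) (nhds (C * 0)) :=
      (continuous_const.mul continuous_id).tendsto 0
    rw [mul_zero] at h1
    exact h1.mono_left nhdsWithin_le_nhds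
  have hsq : Tendsto
      (fun lam : ℝ => lam * (∫ ξ : ℝ, (ξ ^ 2 + φ ξ) ^ (-(lam + 1) / 2)) - 2)
      (nhdsWithin 0 (Set.Ioi 0)) (nhds 0) := by
    apply squeeze_zero_norm' ?_ hCl
    filter_upwards [Ioo_mem_nhdsGT_of_mem (by norm_num : (0:ℝ) ∈ Set.Ico 0 1)] with lam hlam
    rw [Real.norm_eq_abs]
    exact main lam hlam
  have := hsq.add (tendsto_const_nhds (x := (2:ℝ)))
  simpa using this
end

section
/- Let φ : ℝ → ℝ be nonnegative, continuous, with φ(0)=1, ξ²+φ(ξ)>0 everywhere, and φ(ξ) ≤ C(1+ξ²)^{-N} for all N (rapid decay). Then for each real λ > 0 the difference ∫_{|ξ|≥1} (ξ²+φ(ξ))^{-(λ+1)/2} dξ − ∫_{|ξ|≥1} |ξ|^{-λ-1} dξ remains bounded as λ → 0⁺. -/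
/-!
For `|ξ| ≥ 1` and `0 < λ ≤ 1`, the map `t ↦ t ^ (-(λ + 1) / 2)` is `1`-Lipschitz on `[1, ∞)`,
so the two integrands differ by at most `φ ξ`. Hence the difference of the integrals is bounded by
`∫_{|ξ|≥1} φ`, which is finite because `φ ξ ≤ C (1 + ξ²)⁻¹`.
-/

open MeasureTheory Filter Set

section ExteriorIntegrability

variable {E : Type*} [NormedAddCommGroup E] [NormedSpace ℝ E] [FiniteDimensional ℝ E]
  [MeasurableSpace E] [BorelSpace E] {μ : Measure E} [μ.IsAddHaarMeasure]

theorem integrableOn_norm_rpow_of_one_le_norm {a : ℝ} (ha : a < -Module.finrank ℝ E) :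
    IntegrableOn (fun x : E ↦ ‖x‖ ^ a) {x | 1 ≤ ‖x‖} μ := by
  have hS : MeasurableSet {x : E | 1 ≤ ‖x‖} := measurableSet_le measurable_const measurable_norm
  refine ((integrable_one_add_norm (μ := μ) (r := -a) (by linarith)).const_mul
    ((2 : ℝ) ^ (-a))).integrableOn.mono' (measurable_norm.pow_const a).aestronglyMeasurable
    ((ae_restrict_iff' hS).2 ?_)
  refine Eventually.of_forall fun x (hx : 1 ≤ ‖x‖) ↦ ?_
  have hle : (2 * ‖x‖) ^ a ≤ (1 + ‖x‖) ^ a :=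
    Real.rpow_le_rpow_of_nonpos (by positivity) (by linarith) (by linarith)
  rw [Real.mul_rpow zero_le_two (norm_nonneg x)] at hle
  rw [neg_neg, Real.norm_of_nonneg (by positivity), Real.rpow_neg zero_le_two,
    le_inv_mul_iff₀ (by positivity)]
  exact hle

end ExteriorIntegrability

theorem abs_integral_sub_integral_le {α : Type*} [MeasurableSpace α] {μ : Measure α}
    {f g h : α → ℝ} (hf : AEStronglyMeasurable f μ) (hg : Integrable g μ) (hh : Integrable h μ)
    (hfgh : ∀ᵐ x ∂μ, |f x - g x| ≤ h x) :
    |∫ x, f x ∂μ - ∫ x, g x ∂μ| ≤ ∫ x, h x ∂μ := by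
  have hfg : Integrable (fun x ↦ f x - g x) μ := hh.mono' (hf.sub hg.aestronglyMeasurable) hfgh
  have hf_int : Integrable f μ :=
    (hfg.add hg).congr (.of_forall fun x ↦ sub_add_cancel (f x) (g x))
  rw [← integral_sub hf_int hg]
  exact norm_integral_le_of_norm_le (f := fun x ↦ f x - g x) hh hfgh

theorem Real.rpow_neg_sub_rpow_neg_le {a b s : ℝ} (ha : 1 ≤ a) (hab : a ≤ b) (hs₀ : 0 ≤ s)
    (hs₁ : s ≤ 1) : a ^ (-s) - b ^ (-s) ≤ b - a := by
  have ha₀ : 0 < a := by linarith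
  have hb₀ : 0 < b := by linarith
  have hq₀ : 0 < a / b := div_pos ha₀ hb₀
  have hq₁ : a / b ≤ 1 := (div_le_one hb₀).2 hab
  have hfactor : b ^ (-s) = a ^ (-s) * (a / b) ^ s := by
    rw [Real.div_rpow ha₀.le hb₀.le, Real.rpow_neg ha₀.le, Real.rpow_neg hb₀.le]
    field_simp [(Real.rpow_pos_of_pos ha₀ s).ne']
  have hq_le : a / b ≤ (a / b) ^ s := by
    simpa using Real.rpow_le_rpow_of_exponent_ge hq₀ hq₁ hs₁
  have ha_le : a ^ (-s) ≤ 1 := Real.rpow_le_one_of_one_le_of_nonpos ha (by linarith)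
  have hq_s_le : (a / b) ^ s ≤ 1 := Real.rpow_le_one hq₀.le hq₁ hs₀
  calc a ^ (-s) - b ^ (-s) = a ^ (-s) * (1 - (a / b) ^ s) := by rw [hfactor]; ring
    _ ≤ 1 * (1 - a / b) := by gcongr
    _ = (b - a) / b := by field_simp
    _ ≤ b - a := div_le_self (by linarith) (by linarith)

theorem abs_rpow_sq_add_sub_abs_rpow_le {ξ y lam : ℝ} (hξ : 1 ≤ |ξ|) (hy : 0 ≤ y)
    (hlam₀ : -1 ≤ lam) (hlam₁ : lam ≤ 1) :
    |(ξ ^ 2 + y) ^ (-(lam + 1) / 2) - |ξ| ^ (-lam - 1)| ≤ y := by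
  have hsq : 1 ≤ ξ ^ 2 := by nlinarith [sq_abs ξ]
  have habs : |ξ| ^ (-lam - 1) = (ξ ^ 2) ^ (-((lam + 1) / 2)) := by
    rw [← sq_abs ξ, ← Real.rpow_natCast, ← Real.rpow_mul (abs_nonneg ξ)]
    congr 1
    push_cast
    ring
  have hanti : (ξ ^ 2 + y) ^ (-((lam + 1) / 2)) ≤ (ξ ^ 2) ^ (-((lam + 1) / 2)) :=
    Real.rpow_le_rpow_of_nonpos (by linarith) (by linarith) (by linarith)
  rw [habs, neg_div, abs_sub_comm, abs_of_nonneg (sub_nonneg.2 hanti)]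
  simpa using Real.rpow_neg_sub_rpow_neg_le hsq (le_add_of_nonneg_right hy) (by linarith)
    (by linarith)

theorem stmt7_general (φ : ℝ → ℝ) (hcont : Continuous φ) (hnn : ∀ ξ, 0 ≤ φ ξ)
    (hdecay : ∀ N : ℕ, ∃ C : ℝ, ∀ ξ : ℝ, φ ξ ≤ C * (1 + ξ ^ 2) ^ (-(N : ℝ))) :
    ∃ M : ℝ, ∀ᶠ lam in nhdsWithin (0 : ℝ) (Set.Ioi 0),
      |(∫ ξ in {x : ℝ | 1 ≤ |x|}, (ξ ^ 2 + φ ξ) ^ (-(lam + 1) / 2)) -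
        ∫ ξ in {x : ℝ | 1 ≤ |x|}, |ξ| ^ (-lam - 1)| ≤ M := by
  obtain ⟨C, hC⟩ := hdecay 1
  have hφ : Integrable φ := (integrable_inv_one_add_sq.const_mul C).mono'
    hcont.aestronglyMeasurable
    (Eventually.of_forall fun ξ ↦ by simpa [abs_of_nonneg (hnn ξ), Real.rpow_neg_one] using hC ξ)
  have hS : MeasurableSet {x : ℝ | 1 ≤ |x|} := measurableSet_le measurable_const measurable_abs
  refine ⟨∫ ξ in {x : ℝ | 1 ≤ |x|}, φ ξ, ?_⟩
  filter_upwards [Ioo_mem_nhdsGT zero_lt_one] with lam ⟨hlam₀, hlam₁⟩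
  have hpow : IntegrableOn (fun ξ : ℝ ↦ |ξ| ^ (-lam - 1)) {x : ℝ | 1 ≤ |x|} := by
    simpa only [Real.norm_eq_abs] using
      integrableOn_norm_rpow_of_one_le_norm (E := ℝ) (μ := volume) (a := -lam - 1)
        (by rw [Module.finrank_self, Nat.cast_one]; linarith)
  refine abs_integral_sub_integral_le ?_ hpow hφ.integrableOn
    ((ae_restrict_iff' hS).2 (Eventually.of_forall fun ξ hξ ↦
      abs_rpow_sq_add_sub_abs_rpow_le hξ (hnn ξ) (by linarith) hlam₁.le))
  exact (((measurable_id.pow_const 2).add hcont.measurable).pow_const _).aestronglyMeasurable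

/-- For `φ : ℝ → ℝ` nonnegative, continuous, rapidly decreasing, with `φ(0) = 1`
and `ξ² + φ(ξ) > 0` everywhere, the difference
`∫_{|ξ|≥1} (ξ²+φ(ξ))^{-(λ+1)/2} dξ − ∫_{|ξ|≥1} |ξ|^{-λ-1} dξ` stays bounded as `λ → 0⁺`. -/
theorem stmt7 (φ : ℝ → ℝ) (hcont : Continuous φ) (hnn : ∀ ξ, 0 ≤ φ ξ) (h0 : φ 0 = 1)
    (hpos : ∀ ξ : ℝ, 0 < ξ ^ 2 + φ ξ)
    (hdecay : ∀ N : ℕ, ∃ C : ℝ, ∀ ξ : ℝ, φ ξ ≤ C * (1 + ξ ^ 2) ^ (-(N : ℝ))) :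
    ∃ M : ℝ, ∀ᶠ lam in nhdsWithin (0 : ℝ) (Set.Ioi 0),
      |(∫ ξ in {x : ℝ | 1 ≤ |x|}, (ξ ^ 2 + φ ξ) ^ (-(lam + 1) / 2)) -
        ∫ ξ in {x : ℝ | 1 ≤ |x|}, |ξ| ^ (-lam - 1)| ≤ M :=
  stmt7_general φ hcont hnn hdecay
end
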